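/- arXiv:2505.11283 — 5 statements merged into one kernel-verified Lean document; each statement's English description precedes it below -/
import Mathlib

section
/- Let C be a finite multiset of instance values with P(C) ≥ 1. Then b_ARL(C) = max_{c ∈ C} RL(c, C) is a tight upper bound for the average ranking loss over sub-multisets: (i) for every sub-multiset C' ⊆ C with P(C') ≥ 1, ARL(C') ≤ b_ARL(C); and (ii) there exists a sub-multiset C' ⊆ C with P(C') ≥ 1 such that ARL(C') = b_ARL(C). -/
/-- An instance value: a label (`true` = positive, i.e. `y = 1`;
`false` = negative, i.e. `y = 0`) together with a real prediction score. -/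
abbrev Inst : Type := Bool × ℝ

/-- `P C`: the number of positive elements of `C`. -/
def P (C : Multiset Inst) : ℕ := (C.filter (fun c => c.1 = true)).card

/-- `N C`: the number of negative elements of `C`. -/
def N (C : Multiset Inst) : ℕ := (C.filter (fun c => c.1 = false)).card

/-- The penalty `PEN c C`: the sum over all elements `(y, ŷ)` of `C` of
`[y = 0 ∧ ŷ > ŷ_c] + (1/2)·[y = 0 ∧ ŷ = ŷ_c]`. -/
noncomputable def PEN (c : Inst) (C : Multiset Inst) : ℝ :=
  (C.map (fun d => (if d.1 = false ∧ c.2 < d.2 then (1 : ℝ) else 0) +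
    (if d.1 = false ∧ d.2 = c.2 then (1 : ℝ) / 2 else 0))).sum

/-- The ranking loss `RL c C`: `PEN c C` if `c` is positive, and `0` otherwise. -/
noncomputable def RL (c : Inst) (C : Multiset Inst) : ℝ :=
  if c.1 = true then PEN c C else 0

/-- The average ranking loss `ARL C = (Σ_{c ∈ C} RL(c, C)) / P(C)`. -/
noncomputable def ARL (C : Multiset Inst) : ℝ :=
  (C.map (fun c => RL c C)).sum / (P C : ℝ)

/-- `max_{c ∈ C} RL(c, C)`: since all ranking losses are nonnegative, folding
`max` with base `0` over the multiset of ranking losses computes this maximum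
whenever `C` contains a positive element (i.e. `P C ≥ 1`).  When `P C ≥ 1`
this also equals `max_{c ∈ C, c positive} PEN(c, C)`. -/
noncomputable def maxRL (C : Multiset Inst) : ℝ :=
  ((C.map (fun c => RL c C)).toList).foldr max 0

-- helper lemmas
lemma pen_summand_nonneg (c d : Inst) :
    0 ≤ (if d.1 = false ∧ c.2 < d.2 then (1 : ℝ) else 0) +
      (if d.1 = false ∧ d.2 = c.2 then (1 : ℝ) / 2 else 0) := by
  positivity

lemma PEN_nonneg (c : Inst) (C : Multiset Inst) : 0 ≤ PEN c C := by
  apply Multiset.sum_nonneg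
  intro x hx
  obtain ⟨d, _, rfl⟩ := Multiset.mem_map.1 hx
  exact pen_summand_nonneg c d

lemma RL_nonneg (c : Inst) (C : Multiset Inst) : 0 ≤ RL c C := by
  unfold RL; split
  · exact PEN_nonneg c C
  · exact le_refl 0

lemma PEN_mono (c : Inst) {C' C : Multiset Inst} (h : C' ≤ C) : PEN c C' ≤ PEN c C := by
  obtain ⟨D, rfl⟩ := Multiset.le_iff_exists_add.1 h
  unfold PEN
  rw [Multiset.map_add, Multiset.sum_add]
  have : 0 ≤ (D.map (fun d => (if d.1 = false ∧ c.2 < d.2 then (1 : ℝ) else 0) +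
      (if d.1 = false ∧ d.2 = c.2 then (1 : ℝ) / 2 else 0))).sum := by
    apply Multiset.sum_nonneg
    intro x hx
    obtain ⟨d, _, rfl⟩ := Multiset.mem_map.1 hx
    exact pen_summand_nonneg c d
  linarith

lemma foldr_max_nonneg (l : List ℝ) : 0 ≤ l.foldr max 0 := by
  induction l with
  | nil => simp
  | cons a t ih => simpa using Or.inr ih

lemma le_foldr_max {x : ℝ} {l : List ℝ} (hx : x ∈ l) : x ≤ l.foldr max 0 := by
  induction l with
  | nil => simp at hx
  | cons a t ih =>
    rcases List.mem_cons.1 hx with rfl | h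
    · exact le_max_left _ _
    · exact le_trans (ih h) (le_max_right _ _)

lemma foldr_max_le {b : ℝ} {l : List ℝ} (hb : 0 ≤ b) (h : ∀ x ∈ l, x ≤ b) :
    l.foldr max 0 ≤ b := by
  induction l with
  | nil => simpa
  | cons a t ih =>
    simp only [List.foldr_cons]
    exact max_le (h a (by simp)) (ih (fun x hx => h x (List.mem_cons_of_mem _ hx)))

lemma maxRL_nonneg (C : Multiset Inst) : 0 ≤ maxRL C := foldr_max_nonneg _

lemma RL_le_maxRL {c : Inst} {C : Multiset Inst} (hc : c ∈ C) : RL c C ≤ maxRL C := by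
  apply le_foldr_max
  rw [Multiset.mem_toList, Multiset.mem_map]
  exact ⟨c, hc, rfl⟩

lemma sum_ite_pos (s : Multiset Inst) (M : ℝ) :
    (s.map (fun c => if c.1 = true then M else 0)).sum = (P s : ℝ) * M := by
  induction s using Multiset.induction with
  | empty => simp [P]
  | cons a t ih =>
    simp only [Multiset.map_cons, Multiset.sum_cons, ih, P, Multiset.filter_cons]
    by_cases ha : a.1 = true <;> simp [ha] <;> push_cast <;> ring

lemma sum_map_filter_neg (f : Inst → ℝ) (hf : ∀ d : Inst, d.1 = true → f d = 0)
    (s : Multiset Inst) :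
    ((s.filter (fun c => c.1 = false)).map f).sum = (s.map f).sum := by
  induction s using Multiset.induction with
  | empty => simp
  | cons a t ih =>
    rw [Multiset.filter_cons]
    by_cases ha : a.1 = false
    · simp [ha, ih]
    · have : a.1 = true := by simpa using ha
      simp [ha, ih, hf a this]

lemma PEN_filter_neg (c : Inst) (C : Multiset Inst) :
    PEN c (C.filter (fun x => x.1 = false)) = PEN c C := by
  unfold PEN
  apply sum_map_filter_neg
  intro d hd
  simp [hd]

/-- `b_ARL(C) = max_{c ∈ C} RL(c, C)` is a tight upper bound
for the average ranking loss over sub-multisets of `C`. -/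
theorem maxRL_tight_upper_bound_ARL (C : Multiset Inst) (hPC : 1 ≤ P C) :
    (∀ C' ≤ C, 1 ≤ P C' → ARL C' ≤ maxRL C) ∧
    (∃ C' ≤ C, 1 ≤ P C' ∧ ARL C' = maxRL C) := by

  constructor
  · intro C' hle hP'
    have hPpos : (0 : ℝ) < (P C' : ℝ) := by exact_mod_cast hP'
    unfold ARL
    rw [div_le_iff₀ hPpos]
    have h1 : (C'.map (fun c => RL c C')).sum ≤
        (C'.map (fun c => if c.1 = true then maxRL C else 0)).sum := by
      apply Multiset.sum_map_le_sum_map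
      intro c hc
      unfold RL
      by_cases hcp : c.1 = true
      · simp only [hcp, if_true]
        calc PEN c C' ≤ PEN c C := PEN_mono c hle
          _ = RL c C := by simp [RL, hcp]
          _ ≤ maxRL C := RL_le_maxRL (Multiset.mem_of_le hle hc)
      · simp [hcp]
    calc (C'.map (fun c => RL c C')).sum ≤ _ := h1
      _ = (P C' : ℝ) * maxRL C := sum_ite_pos C' (maxRL C)
      _ = maxRL C * (P C' : ℝ) := by ring
  · -- existence
    -- positives of C are nonempty
    have hne : (C.filter (fun c => c.1 = true)) ≠ 0 := by
      intro h
      rw [P, h] at hPC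
      simp at hPC
    obtain ⟨c₀, hc₀⟩ := Multiset.exists_mem_of_ne_zero hne
    -- pick maximizer of PEN among positives
    have : ∃ c ∈ C.filter (fun c => c.1 = true),
        ∀ d ∈ C.filter (fun c => c.1 = true), PEN d C ≤ PEN c C := by
      classical
      obtain ⟨c, hc, hmax⟩ := Finset.exists_max_image
        (C.filter (fun c => c.1 = true)).toFinset (fun d => PEN d C)
        ⟨c₀, Multiset.mem_toFinset.2 hc₀⟩
      exact ⟨c, Multiset.mem_toFinset.1 hc, fun d hd =>
        hmax d (Multiset.mem_toFinset.2 hd)⟩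
    obtain ⟨cs, hcsmem, hcsmax⟩ := this
    have hcsC : cs ∈ C := Multiset.mem_of_mem_filter hcsmem
    have hcspos : cs.1 = true := (Multiset.mem_filter.1 hcsmem).2
    set C' : Multiset Inst := cs ::ₘ (C.filter (fun c => c.1 = false)) with hC'
    have hC'le : C' ≤ C := by
      rw [Multiset.le_iff_count]
      intro a
      rw [hC', Multiset.count_cons]
      by_cases ha : a = cs
      · subst ha
        have h0 : Multiset.count a (C.filter (fun c => c.1 = false)) = 0 := by
          apply Multiset.count_eq_zero_of_notMem
          intro hmem
          have := (Multiset.mem_filter.1 hmem).2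
          rw [hcspos] at this
          exact absurd this (by simp)
        rw [h0, if_pos rfl, zero_add]
        exact Multiset.one_le_count_iff_mem.2 hcsC
      · rw [if_neg ha, add_zero]
        exact le_trans (Multiset.count_le_of_le a (Multiset.filter_le _ C)) le_rfl
    have hPC' : P C' = 1 := by
      have h0 : (C.filter (fun c => c.1 = false)).filter (fun c => c.1 = true) = 0 := by
        rw [Multiset.filter_eq_nil]
        intro a ha hat
        have := (Multiset.mem_filter.1 ha).2
        rw [hat] at this
        exact absurd this (by simp)
      rw [hC', P, Multiset.filter_cons, h0]
      simp [hcspos]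
    -- maxRL C = PEN cs C
    have hmaxeq : maxRL C = PEN cs C := by
      apply le_antisymm
      · apply foldr_max_le (PEN_nonneg cs C)
        intro x hx
        rw [Multiset.mem_toList, Multiset.mem_map] at hx
        obtain ⟨d, hd, rfl⟩ := hx
        unfold RL
        by_cases hdp : d.1 = true
        · simp only [hdp, if_true]
          exact hcsmax d (Multiset.mem_filter.2 ⟨hd, hdp⟩)
        · simp [hdp, PEN_nonneg]
      · have := RL_le_maxRL hcsC
        rwa [RL, if_pos hcspos] at this
    refine ⟨C', hC'le, by rw [hPC'], ?_⟩
    -- ARL C'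
    have hsum : (C'.map (fun c => RL c C')).sum = PEN cs C' := by
      rw [hC', Multiset.map_cons, Multiset.sum_cons]
      have h0 : ((C.filter (fun c => c.1 = false)).map (fun c => RL c C')).sum = 0 := by
        apply Multiset.sum_eq_zero
        intro x hx
        obtain ⟨d, hd, rfl⟩ := Multiset.mem_map.1 hx
        have : d.1 = false := (Multiset.mem_filter.1 hd).2
        simp [RL, this]
      rw [h0, RL, if_pos hcspos, add_zero]
    have hPENC' : PEN cs C' = PEN cs C := by
      rw [hC']
      unfold PEN
      rw [Multiset.map_cons, Multiset.sum_cons]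
      have : (if cs.1 = false ∧ cs.2 < cs.2 then (1:ℝ) else 0) +
          (if cs.1 = false ∧ cs.2 = cs.2 then (1:ℝ)/2 else 0) = 0 := by
        simp [hcspos]
      rw [this, zero_add]
      have := PEN_filter_neg cs C
      unfold PEN at this
      exact this
    rw [ARL, hsum, hPC', hPENC', hmaxeq]
    simp
end

section
/- Let C be a finite multiset of instance values such that every positive element has a strictly greater prediction value than every negative element (i.e., for all (y, ŷ), (y', ŷ') in C, y < y' implies ŷ < ŷ' and y > y' implies ŷ > ŷ'). Then for every sub-multiset C' ⊆ C with P(C') ≥ 1 and N(C') ≥ 1, ROCAUC(C') = 1. -/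
/-- `TP C t`: the number of positives of `C` with prediction strictly above `t`. -/
noncomputable def TP (C : Multiset Inst) (t : ℝ) : ℕ :=
  (C.filter (fun c => c.1 = true ∧ t < c.2)).card

/-- `FP C t`: the number of negatives of `C` with prediction strictly above `t`. -/
noncomputable def FP (C : Multiset Inst) (t : ℝ) : ℕ :=
  (C.filter (fun c => c.1 = false ∧ t < c.2)).card

/-- The ROC/PR supporting points `(TP, FP)` of `C`, listed in order of
decreasing threshold, for `t` ranging over the prediction values occurring in
`C` together with `t = -∞` (the latter yielding the final point `(P C, N C)`). -/
noncomputable def supportingPoints (C : Multiset Inst) : List (ℝ × ℝ) :=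
  (((C.map Prod.snd).toFinset.sort (· ≤ ·)).reverse.map
    (fun t => ((TP C t : ℝ), (FP C t : ℝ)))) ++ [((P C : ℝ), (N C : ℝ))]

/-- The trapezoidal sum `Σ_{i=2}^{k} |FP_i − FP_{i−1}| · (TP_i + TP_{i−1})/2`
over a list of `(TP, FP)` points. -/
noncomputable def trapROC : List (ℝ × ℝ) → ℝ
  | [] => 0
  | [_] => 0
  | a :: b :: l => |b.2 - a.2| * (b.1 + a.1) / 2 + trapROC (b :: l)

/-- The area under the ROC curve of `C` (defined whenever `P C ≥ 1` and `N C ≥ 1`). -/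
noncomputable def ROCAUC (C : Multiset Inst) : ℝ :=
  trapROC (supportingPoints C) / ((P C : ℝ) * (N C : ℝ))

/-- The trapezoidal sum `Σ_{i=2}^{k} |TP_i − TP_{i−1}| ·
(TP_i/(TP_i+FP_i) + TP_{i−1}/(TP_{i−1}+FP_{i−1}))/2` over a list of `(TP, FP)`
points; in `ℝ`, division by zero yields `0`, realizing the convention `0/0 = 0`. -/
noncomputable def trapPR : List (ℝ × ℝ) → ℝ
  | [] => 0
  | [_] => 0
  | a :: b :: l =>
      |b.1 - a.1| * (b.1 / (b.1 + b.2) + a.1 / (a.1 + a.2)) / 2 + trapPR (b :: l)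

/-- The (linearly interpolated) area under the PR curve of `C`
(defined whenever `P C ≥ 1`). -/
noncomputable def PRAUC (C : Multiset Inst) : ℝ :=
  trapPR (supportingPoints C) / (P C : ℝ)
/-!
Under perfect separation, the false-positive count can only grow from one threshold to the next
when the upper threshold is the score of a negative, and then every positive scores above both
thresholds. So every trapezoid of positive width has height `P`, and the trapezoidal sum
telescopes to `P · N`.
-/

def PerfectlySeparated (C : Multiset Inst) : Prop :=
  ∀ c ∈ C, ∀ c' ∈ C, c.1 = false → c'.1 = true → c.2 < c'.2

theorem PerfectlySeparated.mono {C C' : Multiset Inst} (hC : PerfectlySeparated C)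
    (h : C' ≤ C) : PerfectlySeparated C' :=
  fun c hc c' hc' => hC c (Multiset.mem_of_le h hc) c' (Multiset.mem_of_le h hc')

theorem TP_eq_P_of_forall_lt {C : Multiset Inst} {t : ℝ}
    (h : ∀ c ∈ C, c.1 = true → t < c.2) : TP C t = P C :=
  congrArg Multiset.card <|
    Multiset.filter_congr fun c hc => ⟨And.left, fun hy => ⟨hy, h c hc hy⟩⟩

theorem FP_eq_N_of_forall_lt {C : Multiset Inst} {t : ℝ}
    (h : ∀ c ∈ C, c.1 = false → t < c.2) : FP C t = N C :=
  congrArg Multiset.card <|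
    Multiset.filter_congr fun c hc => ⟨And.left, fun hy => ⟨hy, h c hc hy⟩⟩

theorem FP_eq_zero_of_forall_le {C : Multiset Inst} {t : ℝ}
    (h : ∀ c ∈ C, c.1 = false → c.2 ≤ t) : FP C t = 0 :=
  Multiset.card_eq_zero.2 <|
    Multiset.filter_eq_nil.2 fun c hc ⟨hy, hlt⟩ => (h c hc hy).not_gt hlt

theorem FP_antitone (C : Multiset Inst) : Antitone (FP C) := fun _ _ h =>
  Multiset.card_le_card <| Multiset.monotone_filter_right _ fun _ hc => ⟨hc.1, h.trans_lt hc.2⟩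

theorem exists_neg_mem_Ioc_of_FP_lt {C : Multiset Inst} {t t' : ℝ} (h : FP C t < FP C t') :
    ∃ c ∈ C, c.1 = false ∧ c.2 ∈ Set.Ioc t' t := by
  by_contra! hnone
  refine h.not_ge <| Multiset.card_le_card <| Multiset.le_filter.2 ⟨Multiset.filter_le _ _, ?_⟩
  intro c hc
  obtain ⟨hcC, hy, hlt⟩ := Multiset.mem_filter.1 hc
  exact ⟨hy, not_le.1 fun hle => hnone c hcC hy ⟨hlt, hle⟩⟩

noncomputable def rocPoint (C : Multiset Inst) (t : ℝ) : ℝ × ℝ :=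
  ((TP C t : ℝ), (FP C t : ℝ))

theorem supportingPoints_eq_map_reverse {C : Multiset Inst} {t₀ : ℝ}
    (h : ∀ c ∈ C, t₀ < c.2) :
    supportingPoints C =
      (t₀ :: (C.map Prod.snd).toFinset.sort (· ≤ ·)).reverse.map (rocPoint C) := by
  have hlast : rocPoint C t₀ = ((P C : ℝ), (N C : ℝ)) := by
    rw [rocPoint, TP_eq_P_of_forall_lt fun c hc _ => h c hc,
      FP_eq_N_of_forall_lt fun c hc _ => h c hc]
  rw [List.reverse_cons, List.map_append, List.map_singleton, hlast]
  rfl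

/-- On the ROC curve of `(TP, FP)` points, `FP` is the horizontal axis: a `FlatStep` never moves
left, and moves right only at height `p`. -/
def FlatStep (p : ℝ) (x y : ℝ × ℝ) : Prop :=
  x.2 ≤ y.2 ∧ (x.2 < y.2 → x.1 = p ∧ y.1 = p)

theorem trapROC_eq_of_isChain_flatStep {p : ℝ} :
    ∀ {l : List (ℝ × ℝ)} (hl : l ≠ []), l.IsChain (FlatStep p) →
      trapROC l = p * ((l.getLast hl).2 - (l.head hl).2)
  | [_], _, _ => by simp [trapROC]
  | a :: b :: l, _, h => by
    obtain ⟨⟨hle, hflat⟩, htail⟩ := List.isChain_cons_cons.1 h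
    rw [trapROC, trapROC_eq_of_isChain_flatStep (List.cons_ne_nil b l) htail,
      List.getLast_cons (List.cons_ne_nil b l)]
    rcases hle.eq_or_lt with heq | hlt
    · simp [heq]
    · obtain ⟨ha, hb⟩ := hflat hlt
      rw [abs_of_pos (sub_pos.2 hlt), ha, hb]
      simp only [List.head_cons]
      ring

theorem List.isChain_no_mem_between_of_pairwise_lt {α : Type*} [LinearOrder α] :
    ∀ {l : List α}, l.Pairwise (· < ·) →
      l.IsChain (fun a b => a < b ∧ ∀ s ∈ l, s ≤ a ∨ b ≤ s)
  | [], _ => .nil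
  | [_], _ => .singleton _
  | a :: b :: l, h => by
    obtain ⟨ha, hbl⟩ := List.pairwise_cons.1 h
    refine .cons_cons ⟨ha b (by simp), ?_⟩ <|
      (List.isChain_no_mem_between_of_pairwise_lt hbl).imp_of_mem_imp ?_
    · rintro s (_ | ⟨_, _ | ⟨_, hs⟩⟩)
      · exact .inl le_rfl
      · exact .inr le_rfl
      · exact .inr ((List.pairwise_cons.1 hbl).1 s hs).le
    · rintro x y hx - ⟨hxy, hgap⟩
      refine ⟨hxy, ?_⟩
      rintro s (_ | ⟨_, hs⟩)
      · exact .inl (ha x hx).le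
      · exact hgap s hs

theorem PerfectlySeparated.flatStep_rocPoint {C : Multiset Inst} (hC : PerfectlySeparated C)
    {t t' : ℝ} (hlt : t' < t) (hgap : ∀ c ∈ C, c.2 ≤ t' ∨ t ≤ c.2) :
    FlatStep (P C) (rocPoint C t) (rocPoint C t') := by
  refine ⟨Nat.cast_le.2 (FP_antitone C hlt.le), fun hFP => ?_⟩
  obtain ⟨c, hc, hneg, ht'c, hct⟩ := exists_neg_mem_Ioc_of_FP_lt (Nat.cast_lt.1 hFP)
  -- No score lies strictly between `t'` and `t`, so the negative `c` sits exactly at `t`.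
  have hct : c.2 = t := le_antisymm hct ((hgap c hc).resolve_left ht'c.not_ge)
  have hTP : ∀ s ≤ t, TP C s = P C := fun s hs =>
    TP_eq_P_of_forall_lt fun c' hc' hpos => hs.trans_lt (hct ▸ hC c hc c' hc' hneg hpos)
  exact ⟨by rw [rocPoint, hTP t le_rfl], by rw [rocPoint, hTP t' hlt.le]⟩

theorem PerfectlySeparated.trapROC_map_reverse_rocPoint {C : Multiset Inst}
    (hC : PerfectlySeparated C) {L : List ℝ} (hL : L.Pairwise (· < ·))
    (hmem : ∀ c ∈ C, c.2 ∈ L) (hne : L ≠ []) :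
    trapROC (L.reverse.map (rocPoint C)) = P C * (FP C (L.head hne) - FP C (L.getLast hne)) := by
  have hchain : (L.reverse.map (rocPoint C)).IsChain (FlatStep (P C)) := by
    rw [List.isChain_map, List.isChain_reverse]
    exact (List.isChain_no_mem_between_of_pairwise_lt hL).imp fun a b ⟨hab, hgap⟩ =>
      hC.flatStep_rocPoint hab fun c hc => hgap c.2 (hmem c hc)
  rw [trapROC_eq_of_isChain_flatStep (by simpa using hne) hchain]
  simp [rocPoint]

theorem PerfectlySeparated.trapROC_supportingPoints {C : Multiset Inst}
    (hC : PerfectlySeparated C) : trapROC (supportingPoints C) = P C * N C := by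
  have hscore : ∀ c ∈ C, c.2 ∈ (C.map Prod.snd).toFinset := fun c hc =>
    Multiset.mem_toFinset.2 (Multiset.mem_map_of_mem _ hc)
  -- `t₀` plays the role of the threshold `-∞`.
  obtain ⟨t₀, ht₀⟩ : ∃ t₀, ∀ c ∈ C, t₀ < c.2 := by
    obtain ⟨b, hb⟩ := (C.map Prod.snd).toFinset.bddBelow
    exact ⟨b - 1, fun c hc => by linarith [hb (hscore c hc)]⟩
  set L := t₀ :: (C.map Prod.snd).toFinset.sort (· ≤ ·)
  have hmem : ∀ c ∈ C, c.2 ∈ L := fun c hc =>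
    List.mem_cons_of_mem _ ((Finset.mem_sort _).2 (hscore c hc))
  have hL : L.Pairwise (· < ·) := by
    refine List.pairwise_cons.2 ⟨fun s hs => ?_, (Finset.sortedLT_sort _).pairwise⟩
    obtain ⟨c, hc, rfl⟩ :=
      Multiset.mem_map.1 (Multiset.mem_toFinset.1 ((Finset.mem_sort _).1 hs))
    exact ht₀ c hc
  have hmax : ∀ c ∈ C, c.1 = false → c.2 ≤ L.getLast (List.cons_ne_nil _ _) := fun c hc _ =>
    (hL.imp le_of_lt).rel_getLast (hmem c hc)
  rw [supportingPoints_eq_map_reverse ht₀,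
    hC.trapROC_map_reverse_rocPoint hL hmem (List.cons_ne_nil _ _), List.head_cons,
    FP_eq_N_of_forall_lt fun c hc _ => ht₀ c hc, FP_eq_zero_of_forall_le hmax, Nat.cast_zero,
    sub_zero]

/-- If every positive element of `C` has a strictly greater
prediction value than every negative element (for all `(y, ŷ), (y', ŷ')` in
`C`, `y < y'` implies `ŷ < ŷ'` and `y > y'` implies `ŷ > ŷ'`), then every
sub-multiset `C' ⊆ C` with `P C' ≥ 1` and `N C' ≥ 1` has `ROCAUC C' = 1`. -/
theorem rocauc_eq_one_of_perfect (C : Multiset Inst)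
    (hperf : ∀ c ∈ C, ∀ c' ∈ C,
      (c.1 < c'.1 → c.2 < c'.2) ∧ (c'.1 < c.1 → c'.2 < c.2)) :
    ∀ C' ≤ C, 1 ≤ P C' → 1 ≤ N C' → ROCAUC C' = 1 := by
  intro D hD hP hN
  have hC : PerfectlySeparated C := fun c hc c' hc' hneg hpos =>
    (hperf c hc c' hc').1 (by simp [hneg, hpos])
  rw [ROCAUC, (hC.mono hD).trapROC_supportingPoints,
    div_self (mul_ne_zero (Nat.cast_pos.2 hP).ne' (Nat.cast_pos.2 hN).ne')]
end

section
/- Let C be a finite multiset of instance values with P(C) ≥ 1, let ŷ_minpos be the minimal prediction value among the positive elements of C, and let C_{≥} ⊆ C be the sub-multiset of all elements (y, ŷ) of C with ŷ ≥ ŷ_minpos. Then PRAUC(C) = PRAUC(C_{≥}). -/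
theorem trapPR_append_cons (l : List (ℝ × ℝ)) (a : ℝ × ℝ) (r : List (ℝ × ℝ)) :
    trapPR (l ++ a :: r) = trapPR (l ++ [a]) + trapPR (a :: r) := by
  induction l with
  | nil => cases r <;> simp [trapPR]
  | cons x l ih =>
    cases l with
    | nil => cases r <;> simp [trapPR]
    | cons y l => simp only [List.cons_append, trapPR] at ih ⊢; rw [ih]; ring

theorem trapPR_eq_zero_of_forall_fst_eq (x : ℝ) :
    ∀ r : List (ℝ × ℝ), (∀ p ∈ r, p.1 = x) → trapPR r = 0
  | [], _ => rfl
  | [_], _ => rfl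
  | a :: b :: l, h => by
    rw [trapPR, trapPR_eq_zero_of_forall_fst_eq x (b :: l) fun p hp => h p (.tail _ hp),
      h a (by simp), h b (by simp)]
    simp

theorem trapPR_append_cons_of_forall_fst_eq (l : List (ℝ × ℝ)) (a : ℝ × ℝ)
    (r : List (ℝ × ℝ)) (h : ∀ p ∈ r, p.1 = a.1) :
    trapPR (l ++ a :: r) = trapPR (l ++ [a]) := by
  rw [trapPR_append_cons, trapPR_eq_zero_of_forall_fst_eq a.1 (a :: r), add_zero]
  simpa using h

theorem List.filter_le_append_filter_lt_of_pairwise_ge {α : Type*} [LinearOrder α] (m : α) :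
    ∀ l : List α, l.Pairwise (· ≥ ·) → l.filter (m ≤ ·) ++ l.filter (· < m) = l
  | [], _ => rfl
  | a :: l, hl => by
    have ih := filter_le_append_filter_lt_of_pairwise_ge m l hl.of_cons
    by_cases ha : m ≤ a
    · simp [ha, ih]
    · have hlow : l.filter (m ≤ ·) = [] := List.filter_eq_nil_iff.mpr fun t ht => by
        simpa using lt_of_le_of_lt (List.rel_of_pairwise_cons hl ht) (not_le.mp ha)
      simp only [hlow, List.nil_append] at ih
      simp [ha, not_le.mp ha, hlow, ih]

theorem Finset.sort_filter {α : Type*} [LinearOrder α] (s : Finset α) (p : α → Prop)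
    [DecidablePred p] : (s.filter p).sort (· ≤ ·) = (s.sort (· ≤ ·)).filter p := by
  refine List.Perm.eq_of_pairwise' (Finset.pairwise_sort _ _)
    ((Finset.pairwise_sort _ _).filter _) (Multiset.coe_eq_coe.mp ?_)
  rw [Finset.sort_eq, ← Multiset.filter_coe, Finset.sort_eq, Finset.filter_val]

noncomputable def thresholds (C : Multiset Inst) : List ℝ :=
  ((C.map Prod.snd).toFinset.sort (· ≤ ·)).reverse

theorem supportingPoints_eq (C : Multiset Inst) :
    supportingPoints C = (thresholds C).map (fun t => ((TP C t : ℝ), (FP C t : ℝ))) ++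
      [((P C : ℝ), (N C : ℝ))] := rfl

theorem mem_thresholds {C : Multiset Inst} {t : ℝ} : t ∈ thresholds C ↔ ∃ c ∈ C, c.2 = t := by
  simp [thresholds]

theorem pairwise_ge_thresholds (C : Multiset Inst) : (thresholds C).Pairwise (· ≥ ·) :=
  List.pairwise_reverse.mpr (Finset.pairwise_sort _ _)

theorem thresholds_filter_ge (C : Multiset Inst) (m : ℝ) :
    thresholds (C.filter (fun c => m ≤ c.2)) = (thresholds C).filter (m ≤ ·) := by
  have hvalues : ((C.filter (fun c => m ≤ c.2)).map Prod.snd).toFinset =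
      (C.map Prod.snd).toFinset.filter (m ≤ ·) := by
    ext t; simp only [Multiset.mem_toFinset, Multiset.mem_map, Multiset.mem_filter,
      Finset.mem_filter]
    constructor
    · rintro ⟨c, ⟨hc, hm⟩, rfl⟩; exact ⟨⟨c, hc, rfl⟩, hm⟩
    · rintro ⟨⟨c, hc, rfl⟩, hm⟩; exact ⟨c, ⟨hc, hm⟩, rfl⟩
  rw [thresholds, hvalues, Finset.sort_filter, ← List.filter_reverse, thresholds]

section FilterGe

variable {C : Multiset Inst} {m : ℝ}

theorem P_filter_ge (hmin : ∀ c ∈ C, c.1 = true → m ≤ c.2) :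
    P (C.filter (fun c => m ≤ c.2)) = P C := by
  rw [P, P, Multiset.filter_filter]
  exact congrArg _ (Multiset.filter_congr fun c hc => ⟨And.left, fun h => ⟨h, hmin c hc h⟩⟩)

theorem TP_filter_ge (hmin : ∀ c ∈ C, c.1 = true → m ≤ c.2) (t : ℝ) :
    TP (C.filter (fun c => m ≤ c.2)) t = TP C t := by
  rw [TP, TP, Multiset.filter_filter]
  exact congrArg _ (Multiset.filter_congr fun c hc => ⟨And.left, fun h => ⟨h, hmin c hc h.1⟩⟩)

theorem FP_filter_ge {t : ℝ} (ht : m ≤ t) :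
    FP (C.filter (fun c => m ≤ c.2)) t = FP C t := by
  rw [FP, FP, Multiset.filter_filter]
  exact congrArg _ (Multiset.filter_congr fun c _ =>
    ⟨And.left, fun h => ⟨h, ht.trans h.2.le⟩⟩)

theorem TP_eq_P_of_lt (hmin : ∀ c ∈ C, c.1 = true → m ≤ c.2) {t : ℝ} (ht : t < m) :
    TP C t = P C := by
  rw [TP, P]
  exact congrArg _ (Multiset.filter_congr fun c hc =>
    ⟨And.left, fun h => ⟨h, ht.trans_le (hmin c hc h)⟩⟩)

theorem FP_eq_N_filter_ge {t : ℝ} (h : ∀ c ∈ C, t < c.2 ↔ m ≤ c.2) :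
    FP C t = N (C.filter (fun c => m ≤ c.2)) := by
  rw [FP, N, Multiset.filter_filter]
  exact congrArg _ (Multiset.filter_congr fun c hc => and_congr_right fun _ => h c hc)

theorem exists_thresholds_filter_lt_eq_cons {c₁ : Inst} (hc₁ : c₁ ∈ C) (hc₁m : c₁.2 < m) :
    ∃ t₁ rest, (thresholds C).filter (· < m) = t₁ :: rest ∧ ∀ c ∈ C, (t₁ < c.2 ↔ m ≤ c.2) := by
  have mem_filter_lt : ∀ c ∈ C, c.2 < m → c.2 ∈ (thresholds C).filter (· < m) := fun c hc hcm =>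
    List.mem_filter.mpr ⟨mem_thresholds.mpr ⟨c, hc, rfl⟩, by simpa using hcm⟩
  obtain ⟨t₁, rest, hlow⟩ := List.exists_cons_of_ne_nil
    (List.ne_nil_of_mem (mem_filter_lt c₁ hc₁ hc₁m))
  have ht₁m : t₁ < m := by
    have ht₁ : t₁ ∈ (thresholds C).filter (· < m) := hlow ▸ List.mem_cons_self
    simpa using (List.mem_filter.mp ht₁).2
  have hrest : ∀ t ∈ rest, t ≤ t₁ :=
    fun _ => List.rel_of_pairwise_cons (hlow ▸ (pairwise_ge_thresholds C).filter _)
  refine ⟨t₁, rest, hlow, fun c hc => ⟨fun h => not_lt.mp fun hcm => ?_, ht₁m.trans_le⟩⟩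
  rcases List.mem_cons.mp (hlow ▸ mem_filter_lt c hc hcm) with h' | h'
  · exact h.ne' h'
  · exact (hrest _ h').not_gt h

/-- Below the smallest positive score every supporting point has `TP = P C`, so the trapezoids
there are flat; the first of these points, at the largest threshold below `m`, is the final
point `(P, N)` of the filtered multiset. -/
theorem trapPR_supportingPoints_filter_ge (hmin : ∀ c ∈ C, c.1 = true → m ≤ c.2) :
    trapPR (supportingPoints (C.filter (fun c => m ≤ c.2))) = trapPR (supportingPoints C) := by
  by_cases hall : ∀ c ∈ C, m ≤ c.2
  · rw [Multiset.filter_eq_self.mpr hall]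
  obtain ⟨c₁, hc₁, hc₁m⟩ := not_forall₂.mp hall
  obtain ⟨t₁, rest, hlow, hgap⟩ := exists_thresholds_filter_lt_eq_cons hc₁ (not_le.mp hc₁m)
  have hlow_mem : ∀ t ∈ t₁ :: rest, t < m := fun t ht => by
    rw [← hlow] at ht; simpa using (List.mem_filter.mp ht).2
  have ht₁m : t₁ < m := hlow_mem t₁ List.mem_cons_self
  set f : ℝ → ℝ × ℝ := fun t => ((TP C t : ℝ), (FP C t : ℝ))
  have hC : supportingPoints C =
      ((thresholds C).filter (m ≤ ·)).map f ++
        f t₁ :: (rest.map f ++ [((P C : ℝ), (N C : ℝ))]) := by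
    have hsplit := List.filter_le_append_filter_lt_of_pairwise_ge m _ (pairwise_ge_thresholds C)
    rw [hlow] at hsplit
    rw [supportingPoints_eq]
    conv_lhs => rw [← hsplit]
    simp [f]
  have hD : supportingPoints (C.filter (fun c => m ≤ c.2)) =
      ((thresholds C).filter (m ≤ ·)).map f ++ [f t₁] := by
    rw [supportingPoints_eq, thresholds_filter_ge, P_filter_ge hmin, ← TP_eq_P_of_lt hmin ht₁m,
      ← FP_eq_N_filter_ge hgap]
    refine congrArg (· ++ _) (List.map_congr_left fun t ht => ?_)
    have htm : m ≤ t := by simpa using (List.mem_filter.mp ht).2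
    simp [f, TP_filter_ge hmin, FP_filter_ge htm]
  rw [hC, hD, trapPR_append_cons_of_forall_fst_eq _ (f t₁) (rest.map f ++ _)]
  intro p hp
  rcases List.mem_append.mp hp with hp | hp
  · obtain ⟨t, ht, rfl⟩ := List.mem_map.mp hp
    simp [f, TP_eq_P_of_lt hmin (hlow_mem t (.tail _ ht)), TP_eq_P_of_lt hmin ht₁m]
  · simp [List.mem_singleton.mp hp, f, TP_eq_P_of_lt hmin ht₁m]

theorem PRAUC_filter_ge (hmin : ∀ c ∈ C, c.1 = true → m ≤ c.2) :
    PRAUC (C.filter (fun c => m ≤ c.2)) = PRAUC C := by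
  rw [PRAUC, PRAUC, trapPR_supportingPoints_filter_ge hmin, P_filter_ge hmin]

end FilterGe

theorem prauc_eq_prauc_filter_ge_minpos_general (C : Multiset Inst) (c₀ : Inst)
    (hmin : ∀ c ∈ C, c.1 = true → c₀.2 ≤ c.2) :
    PRAUC C = PRAUC (C.filter (fun c => c₀.2 ≤ c.2)) :=
  (PRAUC_filter_ge hmin).symm

/-- Let `c₀` be a positive element of `C` with minimal
prediction value `ŷ_minpos = c₀.2` among the positives of `C`, and let
`C_{≥}` be the sub-multiset of all elements of `C` whose prediction value is
at least `ŷ_minpos`.  Then `PRAUC C = PRAUC C_{≥}`. -/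
theorem prauc_eq_prauc_filter_ge_minpos (C : Multiset Inst) (hP : 1 ≤ P C)
    (c₀ : Inst) (hc₀ : c₀ ∈ C) (hpos : c₀.1 = true)
    (hmin : ∀ c ∈ C, c.1 = true → c₀.2 ≤ c.2) :
    PRAUC C = PRAUC (C.filter (fun c => c₀.2 ≤ c.2)) :=
  prauc_eq_prauc_filter_ge_minpos_general C c₀ hmin
end

section
/- Let α, β ∈ ℝ with 0 < α ≤ β, and let C be a finite multiset of instance values with P(C) > N(C) > 0. Then for every positive element c of C, removing one copy of c does not decrease the weighting: w(C minus one copy of c) ≥ w(C), where w(C) = |C|^α · cb(C)^β. -/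
/-- The class balance `cb C`: `0` if one of the classes is absent, and
`min {N(C)/P(C), P(C)/N(C)}` otherwise. -/
noncomputable def cb (C : Multiset Inst) : ℝ :=
  if P C = 0 ∨ N C = 0 then 0
  else min ((N C : ℝ) / (P C : ℝ)) ((P C : ℝ) / (N C : ℝ))

/-- The weighting `w(C) = |C|^α · cb(C)^β` (real exponents; note that
`Real.rpow` satisfies `0 ^ α = 0` for `α > 0`, matching the convention). -/
noncomputable def w (α β : ℝ) (C : Multiset Inst) : ℝ :=
  (Multiset.card C : ℝ) ^ α * cb C ^ β

/-- For `0 < α ≤ β` and `P C > N C > 0`, removing one copy of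
any positive element `c` of `C` does not decrease the weighting:
`w(C \ {c}) ≥ w(C)`. -/
theorem weighting_le_erase_positive (α β : ℝ) (hα : 0 < α) (hαβ : α ≤ β)
    (C : Multiset Inst) (hNP : N C < P C) (hN : 0 < N C)
    (c : Inst) (hc : c ∈ C) (hpos : c.1 = true) :
    w α β C ≤ w α β (C.erase c) := by

  classical
  -- decompose C as c ::ₘ C'
  set C' := C.erase c with hC'
  have hcons : C = c ::ₘ C' := (Multiset.cons_erase hc).symm
  have hP : P C = P C' + 1 := by
    rw [hcons]
    simp [P, Multiset.filter_cons, hpos]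
  have hNn : N C = N C' := by
    rw [hcons]
    simp [N, Multiset.filter_cons, hpos]
  have hcard : (Multiset.card C : ℕ) = Multiset.card C' + 1 := by
    rw [hcons]; simp
  -- sizes: every element is positive or negative
  have hcard' : ∀ D : Multiset Inst, Multiset.card D = P D + N D := by
    intro D
    have : D.filter (fun x => x.1 = true) + D.filter (fun x => ¬ x.1 = true) = D :=
      Multiset.filter_add_not _ _
    have h2 : D.filter (fun x => x.1 = false) = D.filter (fun x => ¬ x.1 = true) := by
      apply Multiset.filter_congr
      intro x _
      cases x.1 <;> simp
    rw [P, N, h2, ← Multiset.card_add, this]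
  set p : ℕ := P C' with hp
  set n : ℕ := N C' with hn
  have hnpos : 0 < n := hNn ▸ hN
  have hnp : n ≤ p := by
    have := hNP; rw [hP, hNn] at this; omega
  -- real versions
  have hpr : (0:ℝ) < p := by exact_mod_cast lt_of_lt_of_le hnpos hnp
  have hnr : (0:ℝ) < n := by exact_mod_cast hnpos
  have hnpr : (n:ℝ) ≤ p := by exact_mod_cast hnp
  -- cb values
  have hcbC : cb C = (n:ℝ) / (p + 1) := by
    rw [cb, if_neg, hP, hNn]
    · push_cast
      apply min_eq_left
      rw [div_le_div_iff₀ (by linarith) hnr]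
      nlinarith
    · rw [hP, hNn]; omega
  have hcbC' : cb C' = (n:ℝ) / p := by
    rw [cb, if_neg]
    · apply min_eq_left
      rw [div_le_div_iff₀ hpr hnr]
      nlinarith
    · rw [← hp, ← hn]; omega
  -- rewrite the goal
  have hcardC : (Multiset.card C : ℝ) = (p:ℝ) + n + 1 := by
    rw [hcard, hcard' C']; push_cast; ring
  have hcardC' : (Multiset.card C' : ℝ) = (p:ℝ) + n := by
    rw [hcard' C']; push_cast; ring
  rw [w, w, hcbC, hcbC', hcardC, hcardC']
  -- key inequality
  set B : ℝ := (p:ℝ) + n with hB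
  have hBpos : (0:ℝ) < B := by positivity
  have hkey : ((B+1)/B) ^ α ≤ (((p:ℝ)+1)/p) ^ β := by
    have h1 : ((B+1)/B) ^ α ≤ (((p:ℝ)+1)/p) ^ α := by
      apply Real.rpow_le_rpow (by positivity) ?_ hα.le
      rw [div_le_div_iff₀ hBpos hpr]
      nlinarith
    have h2 : (((p:ℝ)+1)/p) ^ α ≤ (((p:ℝ)+1)/p) ^ β := by
      apply Real.rpow_le_rpow_of_exponent_le ?_ hαβ
      rw [le_div_iff₀ hpr]; linarith
    exact h1.trans h2
  rw [Real.div_rpow (by positivity) hBpos.le, Real.div_rpow (by positivity) hpr.le] at hkey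
  rw [div_le_div_iff₀ (by positivity) (by positivity)] at hkey
  rw [Real.div_rpow hnr.le (by positivity), Real.div_rpow hnr.le hpr.le]
  rw [mul_div_assoc', mul_div_assoc', div_le_div_iff₀ (by positivity) (by positivity)]
  have hnb : (0:ℝ) ≤ (n:ℝ) ^ β := by positivity
  nlinarith [mul_le_mul_of_nonneg_left hkey hnb]
end

section
/- Let α, β ∈ ℝ with 0 < α ≤ β, and let C be a finite multiset of instance values. Then b_w(C) = (2 · min{P(C), N(C)})^α is a tight upper bound for the weighting w over sub-multisets: (i) for every sub-multiset C' ⊆ C, w(C') ≤ b_w(C); and (ii) there exists a sub-multiset C' ⊆ C with w(C') = b_w(C). -/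
lemma filter_neg_eq (C : Multiset Inst) :
    C.filter (fun c => c.1 = false) = C.filter (fun c => ¬ (c.1 = true)) := by
  apply Multiset.filter_congr
  intro x _
  cases x.1 <;> simp

lemma card_eq_P_add_N (C : Multiset Inst) : Multiset.card C = P C + N C := by
  unfold P N
  rw [filter_neg_eq, ← Multiset.card_add, Multiset.filter_add_not]

lemma P_mono {C' C : Multiset Inst} (h : C' ≤ C) : P C' ≤ P C :=
  Multiset.card_le_card (Multiset.filter_le_filter _ h)

lemma N_mono {C' C : Multiset Inst} (h : C' ≤ C) : N C' ≤ N C :=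
  Multiset.card_le_card (Multiset.filter_le_filter _ h)

lemma cb_nonneg (C : Multiset Inst) : 0 ≤ cb C := by
  unfold cb
  split
  · exact le_rfl
  · next h =>
    push_neg at h
    have h1 : (0:ℝ) < P C := by exact_mod_cast Nat.pos_of_ne_zero h.1
    have h2 : (0:ℝ) < N C := by exact_mod_cast Nat.pos_of_ne_zero h.2
    exact le_min (div_nonneg h2.le h1.le) (div_nonneg h1.le h2.le)

lemma cb_le_one (C : Multiset Inst) : cb C ≤ 1 := by
  unfold cb
  split
  · norm_num
  · next h =>
    push_neg at h
    have h1 : (0:ℝ) < P C := by exact_mod_cast Nat.pos_of_ne_zero h.1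
    have h2 : (0:ℝ) < N C := by exact_mod_cast Nat.pos_of_ne_zero h.2
    rcases le_total ((P C:ℝ)) ((N C:ℝ)) with hle | hle
    · exact le_trans (min_le_right _ _) ((div_le_one h2).2 hle)
    · exact le_trans (min_le_left _ _) ((div_le_one h1).2 hle)

lemma key (C : Multiset Inst) :
    (Multiset.card C : ℝ) * cb C ≤ 2 * min ((P C : ℝ)) ((N C : ℝ)) := by
  unfold cb
  split
  · next h =>
    simp only [mul_zero]
    positivity
  · next h =>
    push_neg at h
    have h1 : (0:ℝ) < P C := by exact_mod_cast Nat.pos_of_ne_zero h.1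
    have h2 : (0:ℝ) < N C := by exact_mod_cast Nat.pos_of_ne_zero h.2
    rw [card_eq_P_add_N]
    push_cast
    rcases le_total ((P C:ℝ)) ((N C:ℝ)) with hle | hle
    · rw [min_eq_right (by rw [div_le_div_iff₀ h2 h1]; nlinarith),
        min_eq_left hle, mul_comm, div_mul_eq_mul_div, div_le_iff₀ h2]
      nlinarith
    · rw [min_eq_left (by rw [div_le_div_iff₀ h1 h2]; nlinarith),
        min_eq_right hle, mul_comm, div_mul_eq_mul_div, div_le_iff₀ h1]
      nlinarith

/-- For `0 < α ≤ β`, `b_w(C) = (2 · min {P C, N C})^α` is a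
tight upper bound for the weighting `w` over sub-multisets of `C`. -/
theorem weighting_tight_upper_bound (α β : ℝ) (hα : 0 < α) (hαβ : α ≤ β)
    (C : Multiset Inst) :
    (∀ C' ≤ C, w α β C' ≤ ((2 * min (P C) (N C) : ℕ) : ℝ) ^ α) ∧
    (∃ C' ≤ C, w α β C' = ((2 * min (P C) (N C) : ℕ) : ℝ) ^ α) := by
  constructor
  · intro C' hC'
    have hbound : w α β C' ≤ ((2 * min (P C') (N C') : ℕ) : ℝ) ^ α := by
      unfold w
      rcases eq_or_lt_of_le (cb_nonneg C') with hcb | hcb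
      · rw [← hcb, Real.zero_rpow (by linarith), mul_zero]
        positivity
      · have h1 : cb C' ^ β ≤ cb C' ^ α :=
          Real.rpow_le_rpow_of_exponent_ge hcb (cb_le_one C') hαβ
        calc (Multiset.card C' : ℝ) ^ α * cb C' ^ β
            ≤ (Multiset.card C' : ℝ) ^ α * cb C' ^ α := by
              apply mul_le_mul_of_nonneg_left h1
              positivity
          _ = ((Multiset.card C' : ℝ) * cb C') ^ α := by
              rw [← Real.mul_rpow (by positivity) hcb.le]
          _ ≤ ((2 * min (P C') (N C') : ℕ) : ℝ) ^ α := by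
              apply Real.rpow_le_rpow (by positivity) _ hα.le
              have := key C'
              push_cast [Nat.cast_min]
              exact this
    refine hbound.trans (Real.rpow_le_rpow (by positivity) ?_ hα.le)
    have := P_mono hC'
    have := N_mono hC'
    have : min (P C') (N C') ≤ min (P C) (N C) := by omega
    exact_mod_cast Nat.mul_le_mul_left 2 this
  · set m := min (P C) (N C) with hm
    have hmp : m ≤ P C := min_le_left _ _
    have hmn : m ≤ N C := min_le_right _ _
    set pos := C.filter (fun c => c.1 = true) with hpos
    set neg := C.filter (fun c => c.1 = false) with hneg
    set sp : Multiset Inst := ↑(pos.toList.take m) with hsp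
    set sn : Multiset Inst := ↑(neg.toList.take m) with hsn
    have hsp_le : sp ≤ pos := by
      rw [hsp]
      conv_rhs => rw [← Multiset.coe_toList pos]
      exact (pos.toList.take_sublist m).subperm
    have hsn_le : sn ≤ neg := by
      rw [hsn]
      conv_rhs => rw [← Multiset.coe_toList neg]
      exact (neg.toList.take_sublist m).subperm
    have hsp_card : Multiset.card sp = m := by
      rw [hsp]
      simp [List.length_take]
      exact hmp.trans_eq (by simp [hpos, P])
    have hsn_card : Multiset.card sn = m := by
      rw [hsn]
      simp [List.length_take]
      exact hmn.trans_eq (by simp [hneg, N])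
    refine ⟨sp + sn, ?_, ?_⟩
    · calc sp + sn ≤ pos + neg := add_le_add hsp_le hsn_le
        _ = C := by rw [hpos, hneg, filter_neg_eq, Multiset.filter_add_not]
    · have hPsp : P (sp + sn) = m := by
        unfold P
        rw [Multiset.filter_add]
        have e1 : sp.filter (fun c => c.1 = true) = sp := by
          apply Multiset.filter_eq_self.2
          intro a ha
          have := Multiset.mem_of_le hsp_le ha
          rw [hpos, Multiset.mem_filter] at this
          exact this.2
        have e2 : sn.filter (fun c : Inst => c.1 = true) = 0 := by
          apply Multiset.filter_eq_nil.2
          intro a ha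
          have := Multiset.mem_of_le hsn_le ha
          rw [hneg, Multiset.mem_filter] at this
          simp [this.2]
        rw [e1, e2, add_zero, hsp_card]
      have hNsn : N (sp + sn) = m := by
        unfold N
        rw [Multiset.filter_add]
        have e1 : sn.filter (fun c => c.1 = false) = sn := by
          apply Multiset.filter_eq_self.2
          intro a ha
          have := Multiset.mem_of_le hsn_le ha
          rw [hneg, Multiset.mem_filter] at this
          exact this.2
        have e2 : sp.filter (fun c : Inst => c.1 = false) = 0 := by
          apply Multiset.filter_eq_nil.2
          intro a ha
          have := Multiset.mem_of_le hsp_le ha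
          rw [hpos, Multiset.mem_filter] at this
          simp [this.2]
        rw [e1, e2, zero_add, hsn_card]
      unfold w
      rw [card_eq_P_add_N, hPsp, hNsn]
      rcases Nat.eq_zero_or_pos m with hm0 | hm0
      · rw [hm0]
        simp [Real.zero_rpow hα.ne']
      · have hcb : cb (sp + sn) = 1 := by
          unfold cb
          rw [hPsp, hNsn, if_neg (by omega)]
          rw [div_self (by exact_mod_cast hm0.ne'), min_self]
        rw [hcb, Real.one_rpow, mul_one]
        norm_num [two_mul]
end
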